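/- Let T be a positive linear map on n × n complex matrices with Δ(T) ≤ Δ < ∞. Let v be a positive definite matrix with T(v) = λ·v for some λ > 0, and let x be positive definite with T(x) ≠ 0 and d_H(T(x), x) ≤ δ. Then d_H(x, v) ≤ δ / (1 − tanh(Δ/4)). -/

import Mathlib

open Matrix Filter
open scoped ComplexOrder

noncomputable section

/-- The positive semidefinite square root of a positive semidefinite matrix, as defined
by `Matrix.PosSemidef.sqrt` in the older Mathlib (since removed). -/
def posSemidefSqrt {m : Type*} [Fintype m] [DecidableEq m] {A : Matrix m m ℂ}
    (hA : A.PosSemidef) : Matrix m m ℂ :=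
  (hA.1.eigenvectorUnitary : Matrix m m ℂ) * diagonal ((↑) ∘ (√·) ∘ hA.1.eigenvalues) *
    (star hA.1.eigenvectorUnitary : Matrix m m ℂ)

/-- The trace norm `‖A‖₁ = Tr √(AᴴA)` of a complex square matrix. -/
def traceNorm {m : Type*} [Fintype m] [DecidableEq m] (A : Matrix m m ℂ) : ℝ :=
  (posSemidefSqrt (Matrix.posSemidef_conjTranspose_mul_self A)).trace.re

/-- Spectral radius of a map on a complex vector space:
the supremum of the moduli of its eigenvalues. -/
def specRad {M : Type*} [Zero M] [SMul ℂ M] (T : M → M) : ℝ :=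
  sSup {r : ℝ | ∃ (c : ℂ) (v : M), v ≠ 0 ∧ T v = c • v ∧ r = ‖c‖}

/-- A linear map on square matrices is positive if it maps positive semidefinite
matrices to positive semidefinite matrices. -/
def IsPosMap {m : Type*} [Fintype m] (T : Matrix m m ℂ →ₗ[ℂ] Matrix m m ℂ) : Prop :=
  ∀ A : Matrix m m ℂ, A.PosSemidef → (T A).PosSemidef

/-- `sup(x/y) = inf {λ ≥ 0 : x ≤ λ y}` (in `[0,∞]`, with the Loewner order). -/
def supRatio {m : Type*} [Fintype m] (x y : Matrix m m ℂ) : ENNReal :=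
  sInf {r : ENNReal | ∃ c : ℝ, 0 ≤ c ∧ r = ENNReal.ofReal c ∧ (c • y - x).PosSemidef}

/-- `inf(x/y) = sup {λ ≥ 0 : λ y ≤ x}` (in `[0,∞]`, with the Loewner order). -/
def infRatio {m : Type*} [Fintype m] (x y : Matrix m m ℂ) : ENNReal :=
  sSup {r : ENNReal | ∃ c : ℝ, 0 ≤ c ∧ r = ENNReal.ofReal c ∧ (x - c • y).PosSemidef}

/-- The Hilbert projective metric `d_H(x,y) = log (sup(x/y) / inf(x/y)) ∈ [0,∞]`. -/
def dH {m : Type*} [Fintype m] (x y : Matrix m m ℂ) : EReal :=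
  ENNReal.log (supRatio x y / infRatio x y)

/-- The projective diameter `Δ(T) = sup { d_H(T x, T y) : x, y PSD nonzero }`. -/
def DeltaT {m : Type*} [Fintype m] (T : Matrix m m ℂ →ₗ[ℂ] Matrix m m ℂ) : EReal :=
  sSup {e : EReal | ∃ x y : Matrix m m ℂ,
    x.PosSemidef ∧ x ≠ 0 ∧ y.PosSemidef ∧ y ≠ 0 ∧ e = dH (T x) (T y)}

end

/-!
Let `m • v ≤ x ≤ M • v` with `m` maximal and `M` minimal, so that `d_H(x, v) = log (M / m)`.
The images of `u = x - m • v` and `w = M • v - x` satisfy `a • T w ≤ T u ≤ b • T w` with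
`log (b / a) ≤ Δ`, and since `T x = m • T v + T u = M • T v - T w` this squeezes `T x` between
multiples `A • T v` and `B • T v` with `log (B / A) ≤ tanh (Δ / 4) · log (M / m)` (Birkhoff's
contraction estimate, a one-variable calculus inequality). As `T v = λ v` and
`a' • x ≤ T x ≤ b' • x` with `log (b' / a') ≤ δ`, the extremality of `m` and `M` gives
`log (M / m) ≤ δ + tanh (Δ / 4) · log (M / m)`.
-/

open scoped MatrixOrder

section OrderedModule

variable {β : Type*} [AddCommGroup β] [PartialOrder β] [Module ℝ β] [PosSMulMono ℝ β]

lemma le_div_smul_of_smul_le_smul {x y : β} {a c : ℝ} (ha : 0 < a) (h : a • x ≤ c • y) :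
    x ≤ (c / a) • y := by
  rwa [div_eq_inv_mul, ← smul_smul, le_inv_smul_iff_of_pos ha]

lemma div_smul_le_of_smul_le_smul {x y : β} {b c : ℝ} (hb : 0 < b) (h : c • y ≤ b • x) :
    (c / b) • y ≤ x := by
  rwa [div_eq_inv_mul, ← smul_smul, inv_smul_le_iff_of_pos hb]

variable [IsOrderedAddMonoid β]

lemma le_of_smul_le_smul_of_ne_zero {y : β} (hy : 0 ≤ y) (hy0 : y ≠ 0) {c d : ℝ}
    (h : c • y ≤ d • y) : c ≤ d := by
  by_contra! hdc
  have hle : (c - d) • y ≤ 0 := by rwa [sub_smul, sub_nonpos]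
  have hge : 0 ≤ (c - d) • y := smul_nonneg (sub_nonneg.2 hdc.le) hy
  rcases smul_eq_zero.1 (le_antisymm hle hge) with h0 | h0
  · exact (sub_ne_zero.2 hdc.ne') h0
  · exact hy0 h0

lemma smul_le_of_smul_sub_le_sub {p q : β} {a m M : ℝ} (ha : 0 ≤ a)
    (h : a • (M • q - p) ≤ p - m • q) : ((M * a + m) / (a + 1)) • q ≤ p := by
  refine div_smul_le_of_smul_le_smul (by linarith) (sub_nonneg.1 ?_)
  have key : (a + 1) • p - (M * a + m) • q = (p - m • q) - a • (M • q - p) := by module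
  rwa [key, sub_nonneg]

lemma le_smul_of_sub_le_smul_sub {p q : β} {b m M : ℝ} (hb : 0 ≤ b)
    (h : p - m • q ≤ b • (M • q - p)) : p ≤ ((M * b + m) / (b + 1)) • q := by
  refine le_div_smul_of_smul_le_smul (by linarith) (sub_nonneg.1 ?_)
  have key : (M * b + m) • q - (b + 1) • p = b • (M • q - p) - (p - m • q) := by module
  rwa [key, sub_nonneg]

end OrderedModule

namespace Real

lemma tanh_le_tanh {x y : ℝ} (h : x ≤ y) : tanh x ≤ tanh y := by
  have mem : ∀ z, tanh z ∈ Set.Ioo (-1) 1 := fun z => ⟨neg_one_lt_tanh z, tanh_lt_one z⟩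
  rwa [← artanh_le_artanh_iff (mem x) (mem y), artanh_tanh, artanh_tanh]

lemma tanh_nonneg {x : ℝ} (hx : 0 ≤ x) : 0 ≤ tanh x :=
  tanh_zero ▸ tanh_le_tanh hx

end Real

open Real in
lemma mul_div_add_one_sub_le_tanh {a b p : ℝ} (ha : 0 < a) (hab : a ≤ b) (hp : 0 < p) :
    p * b / (p * b + 1) - p * a / (p * a + 1) ≤ tanh (log (b / a) / 4) := by
  set k := exp (log (b / a) / 4) with hk
  have hk1 : 1 ≤ k := one_le_exp (div_nonneg (log_nonneg ((one_le_div ha).2 hab)) four_pos.le)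
  have hb : b = a * k ^ 4 := by
    rw [hk, ← exp_nat_mul, Nat.cast_ofNat, mul_div_cancel₀ _ four_ne_zero,
      exp_log (div_pos (ha.trans_le hab) ha), mul_div_cancel₀ _ ha.ne']
  have ht : tanh (log (b / a) / 4) = (k ^ 2 - 1) / (k ^ 2 + 1) := by
    rw [tanh_eq, exp_neg, ← hk]
    field_simp
  rw [ht, hb, div_sub_div _ _ (by positivity) (by positivity),
    div_le_div_iff₀ (by positivity) (by positivity)]
  -- the gap is `(k² - 1) (p a k² - 1)²`, so equality holds at `p = 1 / (a k²) = 1 / √(ab)`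
  linear_combination mul_nonneg (sub_nonneg.2 (one_le_pow₀ hk1 : 1 ≤ k ^ 2))
    (sq_nonneg (p * a * k ^ 2 - 1))

open Real in
lemma log_div_le_tanh_mul_log {a b s : ℝ} (ha : 0 < a) (hab : a ≤ b) (hs : 1 ≤ s) :
    log ((s * b + 1) / (b + 1) / ((s * a + 1) / (a + 1))) ≤ tanh (log (b / a) / 4) * log s := by
  have hb : 0 < b := ha.trans_le hab
  let g : ℝ → ℝ := fun L => log (exp L * b + 1) - log (exp L * a + 1)
  have hg : ∀ L, HasDerivAt g (exp L * b / (exp L * b + 1) - exp L * a / (exp L * a + 1)) L :=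
    fun L => ((((hasDerivAt_exp L).mul_const b).add_const 1).log (by positivity)).sub
      ((((hasDerivAt_exp L).mul_const a).add_const 1).log (by positivity))
  have key := image_sub_le_mul_sub_of_deriv_le (fun L => (hg L).differentiableAt)
    (fun L => (hg L).deriv ▸ mul_div_add_one_sub_le_tanh ha hab (exp_pos L)) (log_nonneg hs)
  simp only [g, exp_log (zero_lt_one.trans_le hs), exp_zero, one_mul, sub_zero] at key
  rw [log_div (by positivity) (by positivity), log_div (by positivity) (by positivity),
    log_div (by positivity) (by positivity)]
  linarith

section HilbertMetric

variable {ι : Type*} [Fintype ι]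

lemma IsPosMap.monotone {T : Matrix ι ι ℂ →ₗ[ℂ] Matrix ι ι ℂ} (hT : IsPosMap T) : Monotone T :=
  fun A B h => by simpa only [Matrix.le_iff, map_sub] using hT _ h

lemma IsPosMap.map_nonneg {T : Matrix ι ι ℂ →ₗ[ℂ] Matrix ι ι ℂ} (hT : IsPosMap T)
    {A : Matrix ι ι ℂ} (hA : 0 ≤ A) : 0 ≤ T A :=
  map_zero T ▸ hT.monotone hA

lemma isClosed_setOf_posSemidef : IsClosed {A : Matrix ι ι ℂ | A.PosSemidef} := by
  simp_rw [posSemidef_iff_dotProduct_mulVec, Set.ofPred_and, Set.ofPred_forall]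
  exact (isClosed_eq continuous_id.matrix_conjTranspose continuous_id).inter
    (isClosed_iInter fun z => isClosed_le continuous_const (by fun_prop))

def upperRatios (x y : Matrix ι ι ℂ) : Set ℝ := {c | 0 ≤ c ∧ x ≤ c • y}

def lowerRatios (x y : Matrix ι ι ℂ) : Set ℝ := {c | 0 ≤ c ∧ c • y ≤ x}

variable {x y : Matrix ι ι ℂ}

lemma isClosed_upperRatios : IsClosed (upperRatios x y) :=
  isClosed_Ici.inter (isClosed_setOf_posSemidef.preimage (by fun_prop : Continuous (· • y - x)))

lemma isClosed_lowerRatios : IsClosed (lowerRatios x y) :=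
  isClosed_Ici.inter (isClosed_setOf_posSemidef.preimage (by fun_prop : Continuous (x - · • y)))

lemma bddAbove_lowerRatios (hy : 0 ≤ y) (hy0 : y ≠ 0) : BddAbove (lowerRatios x y) := by
  have hy' := nonneg_iff_posSemidef.1 hy
  have htr : 0 < y.trace.re :=
    (Complex.pos_iff.1 (hy'.trace_nonneg.lt_of_ne (Ne.symm ((hy'.trace_eq_zero_iff).not.2 hy0)))).1
  refine ⟨x.trace.re / y.trace.re, fun c hc => (le_div_iff₀ htr).2 ?_⟩
  simpa [trace_sub, trace_smul] using (Complex.le_def.1 (Matrix.le_iff.1 hc.2).trace_nonneg).1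

lemma supRatio_eq_sInf_image : supRatio x y = sInf (ENNReal.ofReal '' upperRatios x y) := by
  rw [supRatio]
  congr 1
  ext r
  simp only [Set.mem_ofPred_eq, Set.mem_image, upperRatios, Matrix.le_iff]
  grind

lemma infRatio_eq_sSup_image : infRatio x y = sSup (ENNReal.ofReal '' lowerRatios x y) := by
  rw [infRatio]
  congr 1
  ext r
  simp only [Set.mem_ofPred_eq, Set.mem_image, lowerRatios, Matrix.le_iff]
  grind

lemma supRatio_eq_of_isLeast {M : ℝ} (h : IsLeast (upperRatios x y) M) :
    supRatio x y = ENNReal.ofReal M := by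
  rw [supRatio_eq_sInf_image, (ENNReal.ofReal_mono.map_isLeast h).csInf_eq]

lemma infRatio_eq_of_isGreatest {m : ℝ} (h : IsGreatest (lowerRatios x y) m) :
    infRatio x y = ENNReal.ofReal m := by
  rw [infRatio_eq_sSup_image, (ENNReal.ofReal_mono.map_isGreatest h).csSup_eq]

lemma dH_self (hy : 0 ≤ y) (hy0 : y ≠ 0) : dH y y = 0 := by
  have hS : IsLeast (upperRatios y y) 1 :=
    ⟨⟨zero_le_one, (one_smul ℝ y).ge⟩,
      fun c hc => le_of_smul_le_smul_of_ne_zero hy hy0 ((one_smul ℝ y).trans_le hc.2)⟩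
  have hI : IsGreatest (lowerRatios y y) 1 :=
    ⟨⟨zero_le_one, (one_smul ℝ y).le⟩,
      fun c hc => le_of_smul_le_smul_of_ne_zero hy hy0 (hc.2.trans_eq (one_smul ℝ y).symm)⟩
  simp [dH, supRatio_eq_of_isLeast hS, infRatio_eq_of_isGreatest hI]

lemma exists_dH_eq_log (hx : 0 ≤ x) (hx0 : x ≠ 0) (hy : 0 ≤ y) (hy0 : y ≠ 0) (h : dH x y ≠ ⊤) :
    ∃ m M, IsGreatest (lowerRatios x y) m ∧ IsLeast (upperRatios x y) M ∧ 0 < m ∧ m ≤ M ∧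
      dH x y = Real.log (M / m) := by
  obtain ⟨m, hm⟩ : ∃ m, IsGreatest (lowerRatios x y) m :=
    ⟨_, isClosed_lowerRatios.isGreatest_csSup ⟨0, le_rfl, by simpa using hx⟩
      (bddAbove_lowerRatios hy hy0)⟩
  have hI := infRatio_eq_of_isGreatest hm
  obtain ⟨M, hM⟩ : ∃ M, IsLeast (upperRatios x y) M := by
    refine ⟨_, isClosed_upperRatios.isLeast_csInf ?_ ⟨0, fun c hc => hc.1⟩⟩
    refine Set.nonempty_iff_ne_empty.2 fun he => h ?_
    rw [dH, supRatio_eq_sInf_image, he, Set.image_empty, sInf_empty, hI,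
      ENNReal.top_div_of_ne_top ENNReal.ofReal_ne_top, ENNReal.log_top]
  have hS := supRatio_eq_of_isLeast hM
  have hM0 : 0 < M := by
    refine hM.1.1.lt_of_ne fun hM0 => hx0 (le_antisymm ?_ hx)
    simpa [← hM0] using hM.1.2
  have hm0 : 0 < m := by
    refine hm.1.1.lt_of_ne fun hm0 => h ?_
    rw [dH, hS, hI, ← hm0, ENNReal.ofReal_zero, ENNReal.div_zero (by simpa using hM0),
      ENNReal.log_top]
  refine ⟨m, M, hm, hM, hm0, le_of_smul_le_smul_of_ne_zero hy hy0 (hm.1.2.trans hM.1.2), ?_⟩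
  rw [dH, hS, hI, ← ENNReal.ofReal_div_of_pos hm0, ENNReal.log_ofReal_of_pos (div_pos hM0 hm0)]

lemma exists_le_smul_of_posDef [DecidableEq ι] [Nonempty ι] (hx : x.IsHermitian)
    (hy : y.PosDef) : ∃ c : ℝ, 0 < c ∧ x ≤ c • y := by
  obtain ⟨r, hr, hry⟩ := (CFC.exists_pos_algebraMap_le_iff hy.isHermitian.isSelfAdjoint).2
    fun _ => hy.isStrictlyPositive.spectrum_pos
  obtain ⟨C, hC⟩ := (isCompact_iff_compactSpace.2 inferInstance : IsCompact (spectrum ℝ x)).bddAbove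
  refine ⟨max C 1 / r, by positivity, ?_⟩
  calc x ≤ algebraMap ℝ _ (max C 1) :=
        le_algebraMap_of_spectrum_le (ha := hx.isSelfAdjoint) fun t ht => (hC ht).trans (le_max_left _ _)
    _ = (max C 1 / r) • algebraMap ℝ _ r := by
        rw [Algebra.algebraMap_eq_smul_one, Algebra.algebraMap_eq_smul_one, smul_smul,
          div_mul_cancel₀ _ hr.ne']
    _ ≤ (max C 1 / r) • y := smul_le_smul_of_nonneg_left hry (by positivity)

lemma dH_ne_top_of_posDef [DecidableEq ι] [Nonempty ι] (hx : x.PosDef) (hy : y.PosDef) :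
    dH x y ≠ ⊤ := by
  obtain ⟨c, hc, hxc⟩ := exists_le_smul_of_posDef hx.isHermitian hy
  obtain ⟨d, hd, hyd⟩ := exists_le_smul_of_posDef hy.isHermitian hx
  have hS : supRatio x y ≠ ⊤ :=
    ne_top_of_le_ne_top ENNReal.ofReal_ne_top (sInf_le ⟨c, hc.le, rfl, hxc⟩)
  have hI : infRatio x y ≠ 0 := (pos_iff_ne_zero.1 <| (ENNReal.ofReal_pos.2 (inv_pos.2 hd)).trans_le
    (le_sSup ⟨d⁻¹, (inv_pos.2 hd).le, rfl, (inv_smul_le_iff_of_pos hd).2 hyd⟩))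
  rw [dH, Ne, ENNReal.log_eq_top_iff]
  exact (ENNReal.div_lt_top hS hI).ne

lemma dH_map_le_DeltaT (T : Matrix ι ι ℂ →ₗ[ℂ] Matrix ι ι ℂ) (hx : 0 ≤ x) (hx0 : x ≠ 0)
    (hy : 0 ≤ y) (hy0 : y ≠ 0) : dH (T x) (T y) ≤ DeltaT T :=
  le_sSup ⟨x, y, nonneg_iff_posSemidef.1 hx, hx0, nonneg_iff_posSemidef.1 hy, hy0, rfl⟩

lemma IsPosMap.zero_le_DeltaT {T : Matrix ι ι ℂ →ₗ[ℂ] Matrix ι ι ℂ} (hT : IsPosMap T)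
    (hx : 0 ≤ x) (hTx : T x ≠ 0) : 0 ≤ DeltaT T := by
  have hx0 : x ≠ 0 := by rintro rfl; exact hTx (map_zero T)
  exact dH_self (hT.map_nonneg hx) hTx ▸ dH_map_le_DeltaT T hx hx0 hx hx0

end HilbertMetric

theorem IsPosMap.exists_smul_le_map_le_smul {ι : Type*} [Fintype ι]
    {T : Matrix ι ι ℂ →ₗ[ℂ] Matrix ι ι ℂ} (hT : IsPosMap T) {Δ : ℝ} (hΔ : DeltaT T ≤ Δ)
    (hΔ0 : 0 ≤ Δ) {x v : Matrix ι ι ℂ} {m M : ℝ} (hm : 0 < m) (hmM : m ≤ M) (hmx : m • v ≤ x)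
    (hxM : x ≤ M • v) :
    ∃ A B : ℝ, 0 < A ∧ 0 < B ∧ A • T v ≤ T x ∧ T x ≤ B • T v ∧
      Real.log (B / A) ≤ Real.tanh (Δ / 4) * Real.log (M / m) := by
  have hL : 0 ≤ Real.log (M / m) := Real.log_nonneg ((one_le_div hm).2 hmM)
  have hM : 0 < M := hm.trans_le hmM
  have hu : 0 ≤ x - m • v := sub_nonneg.2 hmx
  have hw : 0 ≤ M • v - x := sub_nonneg.2 hxM
  have hTu : T (x - m • v) = T x - m • T v := by rw [map_sub, T.map_smul_of_tower]
  have hTw : T (M • v - x) = M • T v - T x := by rw [map_sub, T.map_smul_of_tower]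
  have hlog_one : Real.log (1 : ℝ) ≤ Real.tanh (Δ / 4) * Real.log (M / m) := by
    rw [Real.log_one]
    exact mul_nonneg (Real.tanh_nonneg (by linarith)) hL
  by_cases hu0 : T (x - m • v) = 0
  · rw [hTu, sub_eq_zero] at hu0
    exact ⟨m, m, hm, hm, hu0.ge, hu0.le, by rwa [div_self hm.ne']⟩
  by_cases hw0 : T (M • v - x) = 0
  · rw [hTw, sub_eq_zero] at hw0
    exact ⟨M, M, hM, hM, hw0.le, hw0.ge, by rwa [div_self hM.ne']⟩
  have hΔuw : dH (T (x - m • v)) (T (M • v - x)) ≤ Δ :=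
    (dH_map_le_DeltaT T hu (fun h => hu0 (h ▸ map_zero T)) hw
      (fun h => hw0 (h ▸ map_zero T))).trans hΔ
  obtain ⟨a, b, ha, hb, ha0, hab, hdH⟩ := exists_dH_eq_log (hT.map_nonneg hu) hu0
    (hT.map_nonneg hw) hw0 (ne_top_of_le_ne_top (EReal.coe_ne_top Δ) hΔuw)
  have hlog : Real.log (b / a) ≤ Δ := by rwa [hdH, EReal.coe_le_coe_iff] at hΔuw
  rw [hTu, hTw] at ha hb
  have hpos : ∀ {c : ℝ}, 0 ≤ c → 0 < (M * c + m) / (c + 1) := fun hc =>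
    div_pos (add_pos_of_nonneg_of_pos (mul_nonneg hM.le hc) hm) (by linarith)
  refine ⟨(M * a + m) / (a + 1), (M * b + m) / (b + 1), hpos ha.1.1, hpos hb.1.1,
    smul_le_of_smul_sub_le_sub ha.1.1 ha.1.2, le_smul_of_sub_le_smul_sub hb.1.1 hb.1.2, ?_⟩
  calc Real.log ((M * b + m) / (b + 1) / ((M * a + m) / (a + 1)))
      = Real.log ((M / m * b + 1) / (b + 1) / ((M / m * a + 1) / (a + 1))) := by
        congr 1
        field_simp
    _ ≤ Real.tanh (Real.log (b / a) / 4) * Real.log (M / m) :=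
        log_div_le_tanh_mul_log ha0 hab ((one_le_div hm).2 hmM)
    _ ≤ Real.tanh (Δ / 4) * Real.log (M / m) :=
        mul_le_mul_of_nonneg_right (Real.tanh_le_tanh (by linarith)) hL

/-- Let `T` be a positive linear map with `Δ(T) ≤ Δ < ∞`, let `v` be a
positive definite eigenvector of `T` with eigenvalue `λ > 0`, and let `x` be positive
definite with `T(x) ≠ 0` and `d_H(T(x), x) ≤ δ`.
Then `d_H(x, v) ≤ δ / (1 - tanh(Δ/4))`. -/
theorem stmt9 (n : ℕ)
    (T : Matrix (Fin n) (Fin n) ℂ →ₗ[ℂ] Matrix (Fin n) (Fin n) ℂ) (hT : IsPosMap T)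
    (Δ : ℝ) (hΔ : DeltaT T ≤ (Δ : EReal))
    (v : Matrix (Fin n) (Fin n) ℂ) (hv : v.PosDef)
    (lam : ℝ) (hlam : 0 < lam) (heig : T v = (lam : ℂ) • v)
    (x : Matrix (Fin n) (Fin n) ℂ) (hx : x.PosDef) (hTx : T x ≠ 0)
    (δ : ℝ) (hδ : dH (T x) x ≤ (δ : EReal)) :
    dH x v ≤ ((δ / (1 - Real.tanh (Δ / 4)) : ℝ) : EReal) := by
  have hx0 : x ≠ 0 := by rintro rfl; exact hTx (map_zero T)
  have : Nonempty (Fin n) := by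
    by_contra! h
    exact hx0 (Subsingleton.elim _ _)
  have hxnn := hx.posSemidef.nonneg
  obtain ⟨m, M, hm, hM, hm0, hmM, hdH⟩ := exists_dH_eq_log hxnn hx0 hv.posSemidef.nonneg
    hv.isUnit.ne_zero (dH_ne_top_of_posDef hx hv)
  obtain ⟨a, b, ha, hb, ha0, hab, hdHT⟩ := exists_dH_eq_log (hT.map_nonneg hxnn) hTx hxnn hx0
    (ne_top_of_le_ne_top (EReal.coe_ne_top δ) hδ)
  obtain ⟨A, B, hA0, hB0, hAx, hxB, hBA⟩ := hT.exists_smul_le_map_le_smul hΔ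
    (EReal.coe_nonneg.1 ((hT.zero_le_DeltaT hxnn hTx).trans hΔ)) hm0 hmM hm.1.2 hM.1.2
  have hb0 : 0 < b := ha0.trans_le hab
  have hBa : 0 < B * lam / a := div_pos (mul_pos hB0 hlam) ha0
  have hAb : 0 < A * lam / b := div_pos (mul_pos hA0 hlam) hb0
  have hTv : T v = lam • v := by rw [heig, Complex.coe_smul]
  have hMle : M ≤ B * lam / a := hM.2 ⟨hBa.le,
    le_div_smul_of_smul_le_smul ha0 (ha.1.2.trans (hxB.trans_eq (by rw [hTv, smul_smul])))⟩
  have hmge : A * lam / b ≤ m := hm.2 ⟨hAb.le,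
    div_smul_le_of_smul_le_smul hb0
      ((hAx.trans_eq' (by rw [hTv, smul_smul])).trans hb.1.2)⟩
  have hδ' : Real.log (b / a) ≤ δ := by rwa [hdHT, EReal.coe_le_coe_iff] at hδ
  have hsplit : Real.log (M / m) ≤ Real.log (B / A) + Real.log (b / a) := by
    rw [← Real.log_mul (div_pos hB0 hA0).ne' (div_pos hb0 ha0).ne']
    refine Real.log_le_log (div_pos (hm0.trans_le hmM) hm0) ?_
    calc M / m ≤ (B * lam / a) / (A * lam / b) := div_le_div₀ hBa.le hMle hAb hmge
      _ = B / A * (b / a) := by field_simp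
  rw [hdH, EReal.coe_le_coe_iff, le_div_iff₀ (sub_pos.2 (Real.tanh_lt_one _))]
  linarith
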